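/- The supremum over z ≥ 0 of the standardized absolute third central moment of the standard normal truncated below at z, C₁ = sup_{z ≥ 0} E[|Z − E(Z|Z>z)|³ | Z > z] / Var(Z|Z>z)^{3/2}, is finite. -/

import Mathlib

open Real MeasureTheory

/-- standard normal density -/
noncomputable def stdPhi (t : ℝ) : ℝ := (Real.sqrt (2 * Real.pi))⁻¹ * Real.exp (-t ^ 2 / 2)

/-- standard normal cumulative distribution function -/
noncomputable def stdCDF (x : ℝ) : ℝ := ∫ t in Set.Iic x, stdPhi t

/-- mean of the standard normal truncated below at `z` -/
noncomputable def truncMean (z : ℝ) : ℝ :=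
  ∫ t in Set.Ioi z, t * (stdPhi t / (1 - stdCDF z))

/-- variance of the standard normal truncated below at `z` -/
noncomputable def truncVar (z : ℝ) : ℝ :=
  ∫ t in Set.Ioi z, (t - truncMean z) ^ 2 * (stdPhi t / (1 - stdCDF z))

/-! Everything lives on the scale `1 / (1 + z)`. Writing `t = z + s`, the density satisfies
`φ(t) ≤ e^{1/2} φ(z) e^{-(1+z)s}`, and `φ(t) ≥ e^{-1} φ(z)` for `s ≤ 1 / (1 + z)`. Hence the
tail mass `G = 1 - Φ(z)` is at least `e^{-1} φ(z) / (1 + z)`, and the conditional moments of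
`T - z` are `O((1 + z)^{-k})`; since `z ≤ E[T] ≤ z + O(1/(1+z))`, the third absolute central
moment is `O((1 + z)^{-3})`. Conversely, a density bounded by `φ(z)` with mass `G` cannot
concentrate: its second moment about any point is at least `G³ / (27 φ(z)²)`, so the variance is
at least of order `(1 + z)^{-2}`. The two scales cancel in the standardized ratio. -/

open Set ProbabilityTheory
open scoped Nat

lemma abs_sub_pow_le_pow_add_pow {a b : ℝ} (ha : 0 ≤ a) (hb : 0 ≤ b) (k : ℕ) :
    |a - b| ^ k ≤ a ^ k + b ^ k := by
  rcases le_total a b with hab | hab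
  · have : |a - b| ≤ b := by rw [abs_sub_comm, abs_of_nonneg (by linarith)]; linarith
    linarith [pow_le_pow_left₀ (abs_nonneg _) this k, pow_nonneg ha k]
  · have : |a - b| ≤ a := by rw [abs_of_nonneg (by linarith)]; linarith
    linarith [pow_le_pow_left₀ (abs_nonneg _) this k, pow_nonneg hb k]

lemma pow_mul_exp_neg_mul_le {s l : ℝ} (hs : 0 ≤ s) (hl : 0 < l) (k : ℕ) :
    s ^ k * exp (-(l * s)) ≤ k ! * (2 / l) ^ k * exp (-(l / 2 * s)) := by
  set x := l / 2 * s with hx_def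
  have hx : x ^ k * exp (-x) ≤ k ! := by
    have := pow_div_factorial_le_exp (x := x) (by positivity) k
    rw [div_le_iff₀ (by positivity)] at this
    calc x ^ k * exp (-x) ≤ exp x * k ! * exp (-x) := by gcongr
      _ = k ! := by rw [mul_right_comm, ← exp_add, add_neg_cancel, exp_zero, one_mul]
  have hsx : s = 2 / l * x := by rw [hx_def]; field_simp
  have hexp : exp (-(l * s)) = exp (-x) * exp (-x) := by rw [← exp_add, hx_def]; ring_nf
  calc s ^ k * exp (-(l * s)) = (2 / l) ^ k * (x ^ k * exp (-x)) * exp (-x) := by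
        rw [hexp, hsx, mul_pow]; ring
    _ ≤ (2 / l) ^ k * k ! * exp (-x) := by gcongr
    _ = k ! * (2 / l) ^ k * exp (-x) := by ring

lemma exp_neg_mul_sub (b z t : ℝ) : exp (-(b * (t - z))) = exp (b * z) * exp (-b * t) := by
  rw [← exp_add]; ring_nf

lemma integrableOn_exp_neg_mul_sub {b : ℝ} (hb : 0 < b) (z : ℝ) :
    IntegrableOn (fun t => exp (-(b * (t - z)))) (Ioi z) := by
  simp_rw [exp_neg_mul_sub]
  exact (integrableOn_exp_mul_Ioi (neg_neg_of_pos hb) z).const_mul _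

lemma integral_exp_neg_mul_sub {b : ℝ} (hb : 0 < b) (z : ℝ) :
    ∫ t in Ioi z, exp (-(b * (t - z))) = 1 / b := by
  simp_rw [exp_neg_mul_sub]
  rw [integral_const_mul, integral_exp_mul_Ioi (neg_neg_of_pos hb), neg_div_neg_eq, mul_div_assoc',
    ← exp_add]
  simp

lemma setIntegral_mul_div (s : Set ℝ) (f g : ℝ → ℝ) (c : ℝ) :
    ∫ t in s, f t * (g t / c) = (∫ t in s, f t * g t) / c := by
  simp_rw [← mul_div_assoc]
  exact integral_div c _

lemma pow_three_setIntegral_le_of_le_const {s : Set ℝ} (hs : MeasurableSet s) {f : ℝ → ℝ}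
    {M : ℝ} (m : ℝ) (hM : 0 < M) (hf0 : ∀ t ∈ s, 0 ≤ f t) (hfM : ∀ t ∈ s, f t ≤ M)
    (hf : IntegrableOn f s) (hf2 : IntegrableOn (fun t => (t - m) ^ 2 * f t) s) :
    (∫ t in s, f t) ^ 3 ≤ 27 * M ^ 2 * ∫ t in s, (t - m) ^ 2 * f t := by
  set G := ∫ t in s, f t
  set e := G / (3 * M)
  have he : 0 ≤ e := div_nonneg (setIntegral_nonneg hs hf0) (by positivity)
  set I := Ioo (m - e) (m + e)
  -- At most `2 e M` of the mass lies within `e` of `m`; `e = G / (3 M)` leaves `G / 3` outside.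
  have hpt : ∀ t ∈ s, e ^ 2 * f t - e ^ 2 * M * I.indicator 1 t ≤ (t - m) ^ 2 * f t := by
    intro t ht
    by_cases htI : t ∈ I
    · rw [indicator_of_mem htI, Pi.one_apply]
      nlinarith [hfM t ht, hf0 t ht, sq_nonneg (t - m), sq_nonneg e]
    · have hfar : e ^ 2 ≤ (t - m) ^ 2 := by
        simp only [I, mem_Ioo, not_and_or, not_lt] at htI
        rcases htI with h | h <;> nlinarith
      rw [indicator_of_notMem htI]
      nlinarith [hf0 t ht]
  have hI : IntegrableOn (I.indicator 1) s :=
    ((integrableOn_const (C := (1 : ℝ)) (by simp)).integrable_indicator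
      measurableSet_Ioo).integrableOn
  have hint : ∫ t in s, (e ^ 2 * f t - e ^ 2 * M * I.indicator 1 t) ≤
      ∫ t in s, (t - m) ^ 2 * f t :=
    setIntegral_mono_on ((hf.const_mul _).sub (hI.const_mul _)) hf2 hs hpt
  rw [integral_sub (hf.const_mul _) (hI.const_mul _), integral_const_mul, integral_const_mul,
    integral_indicator_one measurableSet_Ioo, measureReal_restrict_apply measurableSet_Ioo] at hint
  have hvol : volume.real (I ∩ s) ≤ 2 * e := by
    calc volume.real (I ∩ s) ≤ volume.real I :=
          measureReal_mono inter_subset_left measure_Ioo_lt_top.ne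
      _ = 2 * e := by rw [Real.volume_real_Ioo_of_le (by linarith)]; ring
  calc G ^ 3 = 27 * M ^ 2 * (e ^ 2 * G - e ^ 2 * M * (2 * e)) := by
        simp only [e]; field_simp; ring
    _ ≤ 27 * M ^ 2 * ∫ t in s, (t - m) ^ 2 * f t := by
        gcongr
        nlinarith [mul_le_mul_of_nonneg_left hvol (by positivity : 0 ≤ e ^ 2 * M)]

lemma div_rpow_three_halves_le {N V A B l : ℝ} (hA : 0 ≤ A) (hB : 0 < B) (hl : 0 < l)
    (hN : N ≤ A / l ^ 3) (hV : B / l ^ 2 ≤ V) : N / V ^ ((3 : ℝ) / 2) ≤ A / B ^ ((3 : ℝ) / 2) := by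
  have hscale : (B / l ^ 2) ^ ((3 : ℝ) / 2) = B ^ ((3 : ℝ) / 2) / l ^ 3 := by
    rw [div_rpow hB.le (by positivity), ← rpow_natCast l 2, ← rpow_mul hl.le,
      ← rpow_natCast l 3]
    norm_num
  calc N / V ^ ((3 : ℝ) / 2) ≤ A / l ^ 3 / V ^ ((3 : ℝ) / 2) := by
        gcongr
        exact (rpow_pos_of_pos ((by positivity : 0 < B / l ^ 2).trans_le hV) _).le
    _ ≤ A / l ^ 3 / (B / l ^ 2) ^ ((3 : ℝ) / 2) := by gcongr
    _ = A / B ^ ((3 : ℝ) / 2) := by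
        rw [hscale]
        field_simp

lemma stdPhi_eq_gaussianPDFReal : stdPhi = gaussianPDFReal 0 1 := by
  ext t
  simp [stdPhi, gaussianPDFReal]

lemma stdPhi_pos (t : ℝ) : 0 < stdPhi t := by
  rw [stdPhi_eq_gaussianPDFReal]
  exact gaussianPDFReal_pos _ _ _ one_ne_zero

lemma integrable_sub_pow_mul_stdPhi (c : ℝ) (k : ℕ) :
    Integrable fun t => (t - c) ^ k * stdPhi t := by
  have h : Integrable (fun t => ‖t - c‖ ^ k) (gaussianReal 0 1) :=
    ((memLp_id_gaussianReal k).sub (memLp_const c)).integrable_norm_pow'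
  rw [gaussianReal_of_var_ne_zero _ one_ne_zero,
    integrable_withDensity_iff_integrable_smul' (measurable_gaussianPDF _ _)
      (ae_of_all _ fun _ => gaussianPDF_lt_top)] at h
  refine h.mono' (by unfold stdPhi; fun_prop) (ae_of_all _ fun t => ?_)
  simp [toReal_gaussianPDF, stdPhi_eq_gaussianPDFReal,
    abs_of_pos (gaussianPDFReal_pos 0 1 t one_ne_zero), mul_comm]

lemma integrable_stdPhi : Integrable stdPhi := by
  simpa using integrable_sub_pow_mul_stdPhi 0 0

lemma one_sub_stdCDF (z : ℝ) : 1 - stdCDF z = ∫ t in Ioi z, stdPhi t := by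
  rw [stdCDF, ← integral_gaussianPDFReal_eq_one 0 one_ne_zero, ← stdPhi_eq_gaussianPDFReal,
    ← intervalIntegral.integral_Iic_add_Ioi integrable_stdPhi.integrableOn
      integrable_stdPhi.integrableOn]
  ring

lemma stdPhi_eq_mul_exp (z t : ℝ) :
    stdPhi t = stdPhi z * exp (-(z * (t - z) + (t - z) ^ 2 / 2)) := by
  rw [stdPhi, stdPhi, mul_assoc, ← exp_add]
  ring_nf

lemma stdPhi_le_stdPhi {z t : ℝ} (hz : 0 ≤ z) (hzt : z ≤ t) : stdPhi t ≤ stdPhi z := by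
  rw [stdPhi_eq_mul_exp z t]
  refine mul_le_of_le_one_right (stdPhi_pos z).le (exp_le_one_iff.2 ?_)
  nlinarith [mul_nonneg hz (sub_nonneg.2 hzt)]

lemma stdPhi_le_mul_exp (z t : ℝ) :
    stdPhi t ≤ exp (1 / 2) * stdPhi z * exp (-((1 + z) * (t - z))) := by
  rw [stdPhi_eq_mul_exp z t, mul_comm (exp _), mul_assoc, ← exp_add]
  refine mul_le_mul_of_nonneg_left (exp_le_exp.2 ?_) (stdPhi_pos z).le
  nlinarith [sq_nonneg (t - z - 1)]

lemma exp_neg_one_mul_stdPhi_le_stdPhi {z t : ℝ} (hz : 0 ≤ z) (hzt : z ≤ t)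
    (ht : t ≤ z + 1 / (1 + z)) :
    exp (-1) * stdPhi z ≤ stdPhi t := by
  have hs : (t - z) * (1 + z) ≤ 1 := by
    rw [← le_div_iff₀ (by linarith)]; linarith
  rw [stdPhi_eq_mul_exp z t, mul_comm]
  refine mul_le_mul_of_nonneg_left (exp_le_exp.2 ?_) (stdPhi_pos z).le
  nlinarith

lemma exp_neg_one_div_mul_stdPhi_le_one_sub_stdCDF {z : ℝ} (hz : 0 ≤ z) :
    exp (-1) / (1 + z) * stdPhi z ≤ 1 - stdCDF z := by
  have hl : 0 < 1 + z := by linarith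
  rw [one_sub_stdCDF]
  calc exp (-1) / (1 + z) * stdPhi z = ∫ _ in Ioc z (z + 1 / (1 + z)), exp (-1) * stdPhi z := by
        rw [setIntegral_const, Real.volume_real_Ioc_of_le (by simp [hl.le]), smul_eq_mul]
        ring
    _ ≤ ∫ t in Ioc z (z + 1 / (1 + z)), stdPhi t :=
        setIntegral_mono_on (integrableOn_const (by simp)) integrable_stdPhi.integrableOn
          measurableSet_Ioc fun t ht => exp_neg_one_mul_stdPhi_le_stdPhi hz ht.1.le ht.2
    _ ≤ ∫ t in Ioi z, stdPhi t :=
        setIntegral_mono_set integrable_stdPhi.integrableOn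
          (ae_of_all _ fun t => (stdPhi_pos t).le) Ioc_subset_Ioi_self.eventuallyLE

lemma one_sub_stdCDF_pos {z : ℝ} (hz : 0 ≤ z) : 0 < 1 - stdCDF z :=
  lt_of_lt_of_le (by positivity [stdPhi_pos z]) (exp_neg_one_div_mul_stdPhi_le_one_sub_stdCDF hz)

lemma setIntegral_sub_pow_mul_stdPhi_le {z : ℝ} (hz : -1 < z) (k : ℕ) :
    ∫ t in Ioi z, (t - z) ^ k * stdPhi t ≤
      exp (1 / 2) * stdPhi z * k ! * (2 / (1 + z)) ^ (k + 1) := by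
  have hl : 0 < 1 + z := by linarith
  calc ∫ t in Ioi z, (t - z) ^ k * stdPhi t
      ≤ ∫ t in Ioi z, exp (1 / 2) * stdPhi z * (k ! * (2 / (1 + z)) ^ k) *
          exp (-((1 + z) / 2 * (t - z))) := by
        refine setIntegral_mono_on (integrable_sub_pow_mul_stdPhi z k).integrableOn
          ((integrableOn_exp_neg_mul_sub (by positivity) z).const_mul _) measurableSet_Ioi
          fun t ht => ?_
        have hs : 0 ≤ t - z := sub_nonneg.2 (le_of_lt ht)
        calc (t - z) ^ k * stdPhi t
            ≤ (t - z) ^ k * (exp (1 / 2) * stdPhi z * exp (-((1 + z) * (t - z)))) := by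
              gcongr; exact stdPhi_le_mul_exp z t
          _ = exp (1 / 2) * stdPhi z * ((t - z) ^ k * exp (-((1 + z) * (t - z)))) := by ring
          _ ≤ _ := by
              rw [mul_assoc _ _ (exp _)]
              exact mul_le_mul_of_nonneg_left (pow_mul_exp_neg_mul_le hs hl k)
                (by positivity [stdPhi_pos z])
    _ = exp (1 / 2) * stdPhi z * k ! * (2 / (1 + z)) ^ (k + 1) := by
        rw [integral_const_mul, integral_exp_neg_mul_sub (by positivity), one_div_div, pow_succ]
        ring

lemma setIntegral_sub_pow_mul_stdPhi_div_le {z : ℝ} (hz : 0 ≤ z) (k : ℕ) :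
    (∫ t in Ioi z, (t - z) ^ k * stdPhi t) / (1 - stdCDF z) ≤
      2 * exp (3 / 2) * k ! * (2 / (1 + z)) ^ k := by
  refine div_le_of_le_mul₀ (one_sub_stdCDF_pos hz).le (by positivity) ?_
  calc ∫ t in Ioi z, (t - z) ^ k * stdPhi t
      ≤ exp (1 / 2) * stdPhi z * k ! * (2 / (1 + z)) ^ (k + 1) :=
        setIntegral_sub_pow_mul_stdPhi_le (by linarith) k
    _ = 2 * exp (3 / 2) * k ! * (2 / (1 + z)) ^ k * (exp (-1) / (1 + z) * stdPhi z) := by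
        rw [show exp (1 / 2) = exp (3 / 2) * exp (-1) by rw [← exp_add]; norm_num, pow_succ]
        field_simp
    _ ≤ 2 * exp (3 / 2) * k ! * (2 / (1 + z)) ^ k * (1 - stdCDF z) := by
        gcongr
        exact exp_neg_one_div_mul_stdPhi_le_one_sub_stdCDF hz

lemma truncMean_sub_eq {z : ℝ} (hz : 0 ≤ z) :
    truncMean z - z = (∫ t in Ioi z, (t - z) * stdPhi t) / (1 - stdCDF z) := by
  have hG := (one_sub_stdCDF_pos hz).ne'
  have hsplit : ∫ t in Ioi z, (t - z) * stdPhi t =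
      (∫ t in Ioi z, t * stdPhi t) - z * (1 - stdCDF z) := by
    have hint : Integrable fun t => t * stdPhi t := by
      simpa using integrable_sub_pow_mul_stdPhi 0 1
    rw [one_sub_stdCDF, ← integral_const_mul,
      ← integral_sub hint.integrableOn (integrable_stdPhi.integrableOn.const_mul z)]
    simp_rw [sub_mul]
  rw [hsplit, truncMean, setIntegral_mul_div]
  field_simp

lemma le_truncMean {z : ℝ} (hz : 0 ≤ z) : z ≤ truncMean z := by
  rw [← sub_nonneg, truncMean_sub_eq hz]
  refine div_nonneg (setIntegral_nonneg measurableSet_Ioi fun t ht => ?_)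
    (one_sub_stdCDF_pos hz).le
  exact mul_nonneg (sub_nonneg.2 (le_of_lt ht)) (stdPhi_pos t).le

lemma truncMean_sub_le {z : ℝ} (hz : 0 ≤ z) :
    truncMean z - z ≤ 2 * exp (3 / 2) * (2 / (1 + z)) := by
  simpa [truncMean_sub_eq hz] using setIntegral_sub_pow_mul_stdPhi_div_le hz 1

lemma setIntegral_abs_sub_truncMean_pow_three_le {z : ℝ} (hz : 0 ≤ z) :
    ∫ t in Ioi z, |t - truncMean z| ^ 3 * (stdPhi t / (1 - stdCDF z)) ≤
      (∫ t in Ioi z, (t - z) ^ 3 * stdPhi t) / (1 - stdCDF z) + (truncMean z - z) ^ 3 := by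
  set m := truncMean z
  have hG := one_sub_stdCDF_pos hz
  have hle : ∫ t in Ioi z, |t - m| ^ 3 * stdPhi t ≤
      ∫ t in Ioi z, ((t - z) ^ 3 * stdPhi t + (m - z) ^ 3 * stdPhi t) := by
    refine integral_mono_of_nonneg (ae_of_all _ fun t => by positivity [stdPhi_pos t])
      ((integrable_sub_pow_mul_stdPhi z 3).add (integrable_stdPhi.const_mul _)).integrableOn
      (ae_restrict_of_forall_mem measurableSet_Ioi fun t ht => ?_)
    have h := abs_sub_pow_le_pow_add_pow (sub_nonneg.2 (le_of_lt ht))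
      (sub_nonneg.2 (le_truncMean hz)) 3
    rw [sub_sub_sub_cancel_right] at h
    simp only [← add_mul]
    exact mul_le_mul_of_nonneg_right h (stdPhi_pos t).le
  rw [integral_add (integrable_sub_pow_mul_stdPhi z 3).integrableOn
    (integrable_stdPhi.const_mul _).integrableOn, integral_const_mul, ← one_sub_stdCDF] at hle
  rw [setIntegral_mul_div]
  calc (∫ t in Ioi z, |t - m| ^ 3 * stdPhi t) / (1 - stdCDF z)
      ≤ ((∫ t in Ioi z, (t - z) ^ 3 * stdPhi t) + (m - z) ^ 3 * (1 - stdCDF z)) /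
          (1 - stdCDF z) := by gcongr
    _ = _ := by field_simp

lemma sq_exp_neg_one_div_le_truncVar {z : ℝ} (hz : 0 ≤ z) :
    (exp (-1) / (1 + z)) ^ 2 / 27 ≤ truncVar z := by
  have hP := stdPhi_pos z
  have hG := one_sub_stdCDF_pos hz
  have h := pow_three_setIntegral_le_of_le_const measurableSet_Ioi (truncMean z) hP
    (fun t _ => (stdPhi_pos t).le) (fun t ht => stdPhi_le_stdPhi hz (le_of_lt ht))
    integrable_stdPhi.integrableOn (integrable_sub_pow_mul_stdPhi _ 2).integrableOn
  rw [← one_sub_stdCDF] at h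
  rw [truncVar, setIntegral_mul_div]
  calc (exp (-1) / (1 + z)) ^ 2 / 27
      ≤ ((1 - stdCDF z) / stdPhi z) ^ 2 / 27 := by
        gcongr ?_ ^ 2 / _
        rw [le_div_iff₀ hP]
        exact exp_neg_one_div_mul_stdPhi_le_one_sub_stdCDF hz
    _ = (1 - stdCDF z) ^ 3 / (27 * stdPhi z ^ 2) / (1 - stdCDF z) := by
        field_simp
    _ ≤ _ := by
        gcongr
        rw [div_le_iff₀ (by positivity)]
        linarith

/-- The standardized absolute third central moment of the standard normal truncated
below at `z` is bounded uniformly over `z ≥ 0`, i.e. its supremum `C₁` is finite. -/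
theorem stmt_18 :
    ∃ C : ℝ, ∀ z : ℝ, 0 ≤ z →
      (∫ t in Set.Ioi z, |t - truncMean z| ^ 3 * (stdPhi t / (1 - stdCDF z))) /
          (truncVar z) ^ ((3 : ℝ) / 2) ≤ C := by
  set c := 2 * exp (3 / 2)
  refine ⟨8 * (6 * c + c ^ 3) / (exp (-2) / 27) ^ ((3 : ℝ) / 2), fun z hz => ?_⟩
  refine div_rpow_three_halves_le (l := 1 + z) (by positivity) (by positivity) (by linarith)
    ?_ ?_
  · calc _ ≤ _ := setIntegral_abs_sub_truncMean_pow_three_le hz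
      _ ≤ c * 3 ! * (2 / (1 + z)) ^ 3 + (c * (2 / (1 + z))) ^ 3 :=
          add_le_add (setIntegral_sub_pow_mul_stdPhi_div_le hz 3)
            (pow_le_pow_left₀ (sub_nonneg.2 (le_truncMean hz)) (truncMean_sub_le hz) 3)
      _ = 8 * (6 * c + c ^ 3) / (1 + z) ^ 3 := by
          simp only [Nat.factorial]
          field_simp
          ring
  · calc exp (-2) / 27 / (1 + z) ^ 2 = (exp (-1) / (1 + z)) ^ 2 / 27 := by
          rw [show exp (-2) = exp (-1) ^ 2 by rw [← exp_nat_mul]; norm_num, div_pow]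
          ring
      _ ≤ truncVar z := sq_exp_neg_one_div_le_truncVar hz
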